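/- Let G be a group, (X,d_X) a metric space, Ψ a strong homotopy action of G on X, S ⊆ G a finite symmetric subset containing e, k ∈ ℕ and Λ > 0. Define D : (G × X) × (G × X) → [0,∞] by D(z,z') := the infimum over all finite chains z = z_0, z_1, …, z_m = z' in G × X of ∑_{i<m} c(z_i, z_{i+1}), where c((g,x),(g',x')) is the minimum of Λ·d_X(x,x') (allowed when g = g') and 1 (allowed when (g',x') ∈ S¹_{Ψ,S,k}(g,x)), and equals ∞ when neither is allowed. Then: (a) D is a quasi-metric, i.e. D(z,z) = 0, D(z,z') > 0 for z ≠ z', D(z,z') = D(z',z), and D(z,z'') ≤ D(z,z') + D(z',z''); (b) D((g,x),(g,y)) ≤ Λ·d_X(x,y) for all g, x, y, and D((g,x),(h,y)) ≤ 1 whenever (h,y) ∈ S¹_{Ψ,S,k}(g,x); (c) every function d' : (G × X) × (G × X) → [0,∞] that is symmetric, vanishes on the diagonal, satisfies the triangle inequality and satisfies the two bounds in (b) satisfies d' ≤ D pointwise. In other words, D is the largest quasi-metric on G × X satisfying the two bounds. -/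

import Mathlib

/-!
`D` is the path (pseudo)metric generated by the symmetric step cost `qcost`: the infimum of the
lengths of chains. Concatenating and reversing chains gives the triangle inequality and symmetry,
and a function with the triangle inequality that lies below the step cost lies below every chain
length, which is maximality. Positivity then follows from maximality applied to the metric which is
`min 1 (Λ · d_X)` within a fibre `{g} × X` and `1` across fibres.
-/

open unitInterval ENNReal

/-- A strong homotopy action of a group `G` on a topological space `X`.
The argument `(g_j, t_j, g_{j-1}, …, g_1, t_1, g_0, x)` is encoded as the list
`[(g_j,t_j),…,(g_1,t_1)]`, the final group element `g_0` and the point `x`.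
Continuity (with `G` discrete) is encoded summand-wise: for every length `n` and
every fixed tuple of group elements, the map is jointly continuous in the
parameters `t_i ∈ [0,1]` and in `x`. -/
structure StrongHomotopyAction (G X : Type*) [Group G] [TopologicalSpace X] where
  toFun : List (G × unitInterval) → G → X → X
  continuous' : ∀ (n : ℕ) (gs : Fin n → G) (g₀ : G),
    Continuous fun p : (Fin n → unitInterval) × X =>
      toFun (List.ofFn fun i => (gs i, p.1 i)) g₀ p.2
  act_zero : ∀ (L₁ L₂ : List (G × unitInterval)) (g g₀ : G) (x : X),
    toFun (L₁ ++ (g, (0 : unitInterval)) :: L₂) g₀ x = toFun L₁ g (toFun L₂ g₀ x)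
  act_one_mid : ∀ (L₁ L₂ : List (G × unitInterval)) (g g' : G) (t : unitInterval)
      (g₀ : G) (x : X),
    toFun (L₁ ++ (g, (1 : unitInterval)) :: (g', t) :: L₂) g₀ x
      = toFun (L₁ ++ (g * g', t) :: L₂) g₀ x
  act_one_last : ∀ (L : List (G × unitInterval)) (g g₀ : G) (x : X),
    toFun (L ++ [(g, (1 : unitInterval))]) g₀ x = toFun L (g * g₀) x
  id_head : ∀ (t : unitInterval) (L : List (G × unitInterval)) (g₀ : G) (x : X),
    toFun (((1 : G), t) :: L) g₀ x = toFun L g₀ x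
  id_mid : ∀ (L₁ L₂ : List (G × unitInterval)) (g : G) (t t' : unitInterval)
      (g₀ : G) (x : X),
    toFun (L₁ ++ (g, t) :: ((1 : G), t') :: L₂) g₀ x = toFun (L₁ ++ (g, t * t') :: L₂) g₀ x
  id_last : ∀ (L : List (G × unitInterval)) (g : G) (t : unitInterval) (x : X),
    toFun (L ++ [(g, t)]) (1 : G) x = toFun L g x
  id_base : ∀ x : X, toFun [] (1 : G) x = x

variable {G X : Type*} [Group G] [MetricSpace X]

/-- `F_g(Ψ,S,k)`: the set of maps `x ↦ Ψ(g_k, t_k, …, g_0, x)` with `g_i ∈ S`,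
`t_i ∈ [0,1]` and `g_k ⋯ g_0 = g`. -/
def FMaps (Ψ : StrongHomotopyAction G X) (S : Set G) (k : ℕ) (g : G) : Set (X → X) :=
  { f | ∃ (L : List (G × unitInterval)) (g₀ : G), L.length = k ∧
      (∀ q ∈ L, q.1 ∈ S) ∧ g₀ ∈ S ∧ (L.map Prod.fst).prod * g₀ = g ∧
      f = fun x => Ψ.toFun L g₀ x }

/-- `S¹_{Ψ,S,k}(g,x)`. -/
def sOne (Ψ : StrongHomotopyAction G X) (S : Set G) (k : ℕ) (z : G × X) : Set (G × X) :=
  { w | ∃ a ∈ S, ∃ b ∈ S, ∃ f ∈ FMaps Ψ S k a, ∃ f' ∈ FMaps Ψ S k b,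
      f z.2 = f' w.2 ∧ w.1 = z.1 * a⁻¹ * b }

/-- `Sⁿ_{Ψ,S,k}(g,x)`, defined inductively; `sIter Ψ S k 1 = sOne Ψ S k`. -/
def sIter (Ψ : StrongHomotopyAction G X) (S : Set G) (k : ℕ) : ℕ → G × X → Set (G × X)
  | 0 => fun z => {z}
  | n + 1 => fun z => ⋃ w ∈ sIter Ψ S k n z, sOne Ψ S k w

open Classical in
/-- The cost of a single step in a chain: the minimum of `Λ·d_X(x,x')`
(allowed when the group components agree) and `1` (allowed when the target lies in
`S¹_{Ψ,S,k}` of the source); `∞` if neither is allowed. -/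
noncomputable def qcost (Ψ : StrongHomotopyAction G X) (S : Set G) (k : ℕ) (Λ : ℝ)
    (z w : G × X) : ℝ≥0∞ :=
  min (if z.1 = w.1 then ENNReal.ofReal (Λ * dist z.2 w.2) else ⊤)
      (if w ∈ sOne Ψ S k z then 1 else ⊤)

/-- The quasi-metric `d_{Ψ,S,k,Λ}` on `G × X`: the infimum over all finite chains
of the sum of the step costs. -/
noncomputable def qdist (Ψ : StrongHomotopyAction G X) (S : Set G) (k : ℕ) (Λ : ℝ)
    (z w : G × X) : ℝ≥0∞ :=
  ⨅ (m : ℕ) (c : Fin (m + 1) → G × X) (_ : c 0 = z) (_ : c (Fin.last m) = w),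
    ∑ i : Fin m, qcost Ψ S k Λ (c i.castSucc) (c i.succ)

section ChainDist

variable {α : Type*} (c : α → α → ℝ≥0∞)

noncomputable def chainLength {m : ℕ} (p : Fin (m + 1) → α) : ℝ≥0∞ :=
  ∑ i : Fin m, c (p i.castSucc) (p i.succ)

noncomputable def chainDist (z w : α) : ℝ≥0∞ :=
  ⨅ (m : ℕ) (p : Fin (m + 1) → α) (_ : p 0 = z) (_ : p (Fin.last m) = w), chainLength c p

variable {c}

theorem chainLength_eq_castSucc_add {m : ℕ} (p : Fin (m + 2) → α) :
    chainLength c p =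
      chainLength c (p ∘ Fin.castSucc) + c (p (Fin.last m).castSucc) (p (Fin.last (m + 1))) := by
  rw [chainLength, Fin.sum_univ_castSucc, Fin.succ_last]
  simp only [chainLength, Fin.succ_castSucc, Function.comp_apply]

theorem chainLength_snoc {m : ℕ} (p : Fin (m + 1) → α) (v : α) :
    chainLength c (Fin.snoc p v : Fin (m + 2) → α) =
      chainLength c p + c (p (Fin.last m)) v := by
  simp [chainLength_eq_castSucc_add]

theorem apply_last_le_add_chainLength {φ : α → ℝ≥0∞}
    (hφ : ∀ w v, φ v ≤ φ w + c w v) :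
    ∀ {m : ℕ} (p : Fin (m + 1) → α), φ (p (Fin.last m)) ≤ φ (p 0) + chainLength c p
  | 0, p => by simp [chainLength]
  | m + 1, p =>
    calc φ (p (Fin.last (m + 1)))
        ≤ φ (p (Fin.last m).castSucc) + c (p (Fin.last m).castSucc) (p (Fin.last (m + 1))) :=
          hφ _ _
      _ ≤ φ (p 0) + chainLength c (p ∘ Fin.castSucc)
            + c (p (Fin.last m).castSucc) (p (Fin.last (m + 1))) := by
          gcongr; exact apply_last_le_add_chainLength hφ (p ∘ Fin.castSucc)
      _ = φ (p 0) + chainLength c p := by rw [add_assoc, chainLength_eq_castSucc_add]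

theorem chainDist_le_chainLength {m : ℕ} (p : Fin (m + 1) → α) :
    chainDist c (p 0) (p (Fin.last m)) ≤ chainLength c p :=
  iInf_le_of_le m <| iInf_le_of_le p <| iInf_le_of_le rfl <| iInf_le _ rfl

theorem le_chainDist_add {a b : ℝ≥0∞} {z w : α}
    (h : ∀ (m : ℕ) (p : Fin (m + 1) → α), p 0 = z → p (Fin.last m) = w →
      a ≤ chainLength c p + b) :
    a ≤ chainDist c z w + b := by
  simpa only [chainDist, ENNReal.iInf_add, le_iInf_iff] using h

theorem le_chainDist_of_forall_le_chainLength {a : ℝ≥0∞} {z w : α}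
    (h : ∀ (m : ℕ) (p : Fin (m + 1) → α), p 0 = z → p (Fin.last m) = w →
      a ≤ chainLength c p) :
    a ≤ chainDist c z w := by
  simpa only [chainDist, le_iInf_iff] using h

theorem chainDist_self (z : α) : chainDist c z z = 0 :=
  nonpos_iff_eq_zero.mp <| by
    simpa [chainLength] using chainDist_le_chainLength (c := c) (fun _ : Fin 1 => z)

theorem chainDist_le (z w : α) : chainDist c z w ≤ c z w := by
  simpa [chainLength] using chainDist_le_chainLength (c := c) ![z, w]

theorem le_chainDist {d : α → α → ℝ≥0∞} (hd_self : ∀ z, d z z = 0)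
    (hd_triangle : ∀ z w v, d z v ≤ d z w + d w v) (hd_le : ∀ z w, d z w ≤ c z w)
    (z w : α) : d z w ≤ chainDist c z w := by
  refine le_chainDist_of_forall_le_chainLength fun m p hp0 hpm => ?_
  subst hp0 hpm
  simpa [hd_self] using apply_last_le_add_chainLength (φ := d (p 0))
    (fun w v => (hd_triangle _ w v).trans (by gcongr; exact hd_le w v)) p

theorem chainDist_le_chainDist_add (z w v : α) : chainDist c z v ≤ chainDist c z w + c w v :=
  le_chainDist_add fun m p hp0 hpm => by
    subst hp0 hpm
    simpa [chainLength_snoc] using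
      chainDist_le_chainLength (c := c) (Fin.snoc p v : Fin (m + 2) → α)

theorem chainDist_triangle (z w v : α) :
    chainDist c z v ≤ chainDist c z w + chainDist c w v := by
  rw [add_comm]
  exact le_chainDist_add fun m p hp0 hpm => by
    subst hp0 hpm
    rw [add_comm]
    exact apply_last_le_add_chainLength (fun w v => chainDist_le_chainDist_add z w v) p

theorem chainDist_comm (hc : ∀ z w, c z w = c w z) (z w : α) :
    chainDist c z w = chainDist c w z := by
  suffices h : ∀ z w, chainDist c w z ≤ chainDist c z w from le_antisymm (h w z) (h z w)
  refine fun z w => le_chainDist_of_forall_le_chainLength fun m p hp0 hpm => ?_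
  subst hp0 hpm
  calc chainDist c (p (Fin.last m)) (p 0)
        = chainDist c ((p ∘ Fin.rev) 0) ((p ∘ Fin.rev) (Fin.last m)) := by simp
    _ ≤ chainLength c (p ∘ Fin.rev) := chainDist_le_chainLength _
    _ = chainLength c p := by
        rw [chainLength, chainLength, ← Equiv.sum_comp Fin.revPerm]
        simp [Fin.rev_castSucc, Fin.rev_succ, hc]

end ChainDist

section Truncation

variable {M : Type*} [AddCommMonoid M] [LinearOrder M] [CanonicallyOrderedAdd M]

theorem min_le_min_add_min_of_le_add {a x y z : M} (h : x ≤ y + z) :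
    min a x ≤ min a y + min a z := by
  rcases le_total a y with hy | hy
  · exact (min_le_left a x).trans ((min_eq_left hy).ge.trans le_self_add)
  rcases le_total a z with hz | hz
  · exact (min_le_left a x).trans ((min_eq_left hz).ge.trans le_add_self)
  rw [min_eq_right hy, min_eq_right hz]
  exact (min_le_right a x).trans h

end Truncation

section FiberDist

variable {ι Y : Type*} [PseudoMetricSpace Y]

open Classical in
noncomputable def fiberDist (Λ : ℝ) (z w : ι × Y) : ℝ≥0∞ :=
  if z.1 = w.1 then ENNReal.ofReal (Λ * dist z.2 w.2) else ⊤

theorem fiberDist_self (Λ : ℝ) (z : ι × Y) : fiberDist Λ z z = 0 := by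
  simp [fiberDist]

theorem fiberDist_comm (Λ : ℝ) (z w : ι × Y) : fiberDist Λ z w = fiberDist Λ w z := by
  by_cases h : z.1 = w.1 <;> simp [fiberDist, h, dist_comm, Ne.symm]

theorem fiberDist_triangle {Λ : ℝ} (hΛ : 0 ≤ Λ) (z w v : ι × Y) :
    fiberDist Λ z v ≤ fiberDist Λ z w + fiberDist Λ w v := by
  by_cases hzw : z.1 = w.1
  · by_cases hwv : w.1 = v.1
    · simp only [fiberDist, hzw, hwv, if_true]
      calc ENNReal.ofReal (Λ * dist z.2 v.2)
          ≤ ENNReal.ofReal (Λ * dist z.2 w.2 + Λ * dist w.2 v.2) := by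
            rw [← mul_add]
            gcongr
            exact dist_triangle _ _ _
        _ ≤ _ := ENNReal.ofReal_add_le
    · simp [fiberDist, hwv]
  · simp [fiberDist, hzw]

end FiberDist

section QDist

variable (Ψ : StrongHomotopyAction G X) (S : Set G) (k : ℕ) (Λ : ℝ)

theorem qdist_eq_chainDist : qdist Ψ S k Λ = chainDist (qcost Ψ S k Λ) := rfl

open Classical in
theorem qcost_eq_min_fiberDist (z w : G × X) :
    qcost Ψ S k Λ z w = min (fiberDist Λ z w) (if w ∈ sOne Ψ S k z then 1 else ⊤) := rfl

variable {Ψ S k} in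
theorem sOne_symm {z w : G × X} (h : w ∈ sOne Ψ S k z) : z ∈ sOne Ψ S k w := by
  obtain ⟨a, ha, b, hb, f, hf, f', hf', heq, hg⟩ := h
  exact ⟨b, hb, a, ha, f', hf', f, hf, heq.symm, by rw [hg]; group⟩

theorem mem_sOne_comm (z w : G × X) : w ∈ sOne Ψ S k z ↔ z ∈ sOne Ψ S k w :=
  ⟨sOne_symm, sOne_symm⟩

theorem qcost_comm (z w : G × X) : qcost Ψ S k Λ z w = qcost Ψ S k Λ w z := by
  rw [qcost_eq_min_fiberDist, qcost_eq_min_fiberDist, fiberDist_comm, mem_sOne_comm]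

variable {Ψ S k Λ} in
theorem le_qcost {d : G × X → G × X → ℝ≥0∞}
    (hd_fiber : ∀ (g : G) (x y : X), d (g, x) (g, y) ≤ ENNReal.ofReal (Λ * dist x y))
    (hd_sOne : ∀ z w : G × X, w ∈ sOne Ψ S k z → d z w ≤ 1) (z w : G × X) :
    d z w ≤ qcost Ψ S k Λ z w := by
  rw [qcost_eq_min_fiberDist]
  refine le_min ?_ ?_
  · rcases z with ⟨g, x⟩
    rcases w with ⟨g', y⟩
    by_cases h : g = g'
    · subst h
      simpa [fiberDist] using hd_fiber g x y
    · simp [fiberDist, h]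
  · split_ifs with h
    exacts [hd_sOne z w h, le_top]

theorem qdist_self (z : G × X) : qdist Ψ S k Λ z z = 0 := by
  rw [qdist_eq_chainDist]
  exact chainDist_self z

theorem qdist_comm (z w : G × X) : qdist Ψ S k Λ z w = qdist Ψ S k Λ w z := by
  rw [qdist_eq_chainDist]
  exact chainDist_comm (qcost_comm Ψ S k Λ) z w

theorem qdist_triangle (z w v : G × X) :
    qdist Ψ S k Λ z v ≤ qdist Ψ S k Λ z w + qdist Ψ S k Λ w v := by
  rw [qdist_eq_chainDist]
  exact chainDist_triangle z w v

theorem qdist_le_ofReal_dist (g : G) (x y : X) :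
    qdist Ψ S k Λ (g, x) (g, y) ≤ ENNReal.ofReal (Λ * dist x y) :=
  (chainDist_le (c := qcost Ψ S k Λ) _ _).trans <| (min_le_left _ _).trans (by simp)

theorem qdist_le_one_of_mem_sOne {z w : G × X} (h : w ∈ sOne Ψ S k z) :
    qdist Ψ S k Λ z w ≤ 1 :=
  (chainDist_le (c := qcost Ψ S k Λ) _ _).trans <| (min_le_right _ _).trans (by simp [h])

variable {Ψ S k Λ} in
theorem le_qdist {d : G × X → G × X → ℝ≥0∞} (hd_self : ∀ z, d z z = 0)
    (hd_triangle : ∀ z w v, d z v ≤ d z w + d w v)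
    (hd_fiber : ∀ (g : G) (x y : X), d (g, x) (g, y) ≤ ENNReal.ofReal (Λ * dist x y))
    (hd_sOne : ∀ z w : G × X, w ∈ sOne Ψ S k z → d z w ≤ 1) (z w : G × X) :
    d z w ≤ qdist Ψ S k Λ z w :=
  le_chainDist hd_self hd_triangle (le_qcost hd_fiber hd_sOne) z w

variable {Λ} in
theorem qdist_pos (hΛ : 0 < Λ) {z w : G × X} (h : z ≠ w) : 0 < qdist Ψ S k Λ z w := by
  have hd_pos : 0 < min 1 (fiberDist Λ z w) := by
    refine lt_min one_pos ?_
    by_cases h₁ : z.1 = w.1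
    · have h₂ : z.2 ≠ w.2 := fun h₂ => h (Prod.ext h₁ h₂)
      simpa [fiberDist, h₁] using mul_pos hΛ (dist_pos.mpr h₂)
    · simp [fiberDist, h₁]
  refine hd_pos.trans_le (le_qdist (d := fun z w => min 1 (fiberDist Λ z w)) ?_ ?_ ?_ ?_ z w)
  · simp [fiberDist_self]
  · exact fun z w v => min_le_min_add_min_of_le_add (fiberDist_triangle hΛ.le z w v)
  · exact fun g x y => (min_le_right _ _).trans (by simp [fiberDist])
  · exact fun _ _ _ => min_le_left _ _

end QDist

theorem qdist_is_largest_quasimetric_general {G X : Type*} [Group G] [MetricSpace X]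
    (Ψ : StrongHomotopyAction G X) (S : Set G) (k : ℕ) (Λ : ℝ) (hΛ : 0 < Λ) :
    -- (a) `D` is a quasi-metric
    ((∀ z : G × X, qdist Ψ S k Λ z z = 0) ∧
     (∀ z w : G × X, z ≠ w → 0 < qdist Ψ S k Λ z w) ∧
     (∀ z w : G × X, qdist Ψ S k Λ z w = qdist Ψ S k Λ w z) ∧
     (∀ z w v : G × X, qdist Ψ S k Λ z v ≤ qdist Ψ S k Λ z w + qdist Ψ S k Λ w v)) ∧
    -- (b) the two bounds
    ((∀ (g : G) (x y : X),
        qdist Ψ S k Λ (g, x) (g, y) ≤ ENNReal.ofReal (Λ * dist x y)) ∧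
     (∀ z w : G × X, w ∈ sOne Ψ S k z → qdist Ψ S k Λ z w ≤ 1)) ∧
    -- (c) maximality
    (∀ d' : G × X → G × X → ℝ≥0∞,
      (∀ z : G × X, d' z z = 0) →
      (∀ z w : G × X, d' z w = d' w z) →
      (∀ z w v : G × X, d' z v ≤ d' z w + d' w v) →
      (∀ (g : G) (x y : X), d' (g, x) (g, y) ≤ ENNReal.ofReal (Λ * dist x y)) →
      (∀ z w : G × X, w ∈ sOne Ψ S k z → d' z w ≤ 1) →
      ∀ z w : G × X, d' z w ≤ qdist Ψ S k Λ z w) := by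
  refine ⟨⟨qdist_self Ψ S k Λ, fun _ _ => qdist_pos Ψ S k hΛ, qdist_comm Ψ S k Λ,
      qdist_triangle Ψ S k Λ⟩,
    ⟨qdist_le_ofReal_dist Ψ S k Λ, fun _ _ => qdist_le_one_of_mem_sOne Ψ S k Λ⟩,
    fun _ hd_self _ hd_triangle hd_fiber hd_sOne => le_qdist hd_self hd_triangle hd_fiber hd_sOne⟩

/-- The chain infimum `D = d_{Ψ,S,k,Λ}` is the largest quasi-metric on `G × X`
satisfying `D((g,x),(g,y)) ≤ Λ·d_X(x,y)` and `D((g,x),(h,y)) ≤ 1` for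
`(h,y) ∈ S¹_{Ψ,S,k}(g,x)`. -/
theorem qdist_is_largest_quasimetric {G X : Type*} [Group G] [MetricSpace X]
    (Ψ : StrongHomotopyAction G X) (S : Set G) (hSfin : S.Finite)
    (hSsymm : ∀ s ∈ S, s⁻¹ ∈ S) (hSone : (1 : G) ∈ S) (k : ℕ) (Λ : ℝ) (hΛ : 0 < Λ) :
    -- (a) `D` is a quasi-metric
    ((∀ z : G × X, qdist Ψ S k Λ z z = 0) ∧
     (∀ z w : G × X, z ≠ w → 0 < qdist Ψ S k Λ z w) ∧
     (∀ z w : G × X, qdist Ψ S k Λ z w = qdist Ψ S k Λ w z) ∧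
     (∀ z w v : G × X, qdist Ψ S k Λ z v ≤ qdist Ψ S k Λ z w + qdist Ψ S k Λ w v)) ∧
    -- (b) the two bounds
    ((∀ (g : G) (x y : X),
        qdist Ψ S k Λ (g, x) (g, y) ≤ ENNReal.ofReal (Λ * dist x y)) ∧
     (∀ z w : G × X, w ∈ sOne Ψ S k z → qdist Ψ S k Λ z w ≤ 1)) ∧
    -- (c) maximality
    (∀ d' : G × X → G × X → ℝ≥0∞,
      (∀ z : G × X, d' z z = 0) →
      (∀ z w : G × X, d' z w = d' w z) →
      (∀ z w v : G × X, d' z v ≤ d' z w + d' w v) →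
      (∀ (g : G) (x y : X), d' (g, x) (g, y) ≤ ENNReal.ofReal (Λ * dist x y)) →
      (∀ z w : G × X, w ∈ sOne Ψ S k z → d' z w ≤ 1) →
      ∀ z w : G × X, d' z w ≤ qdist Ψ S k Λ z w) :=
  qdist_is_largest_quasimetric_general Ψ S k Λ hΛ
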